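/- Channel decomposition: Let i,j ∈ G, let ρ be a state with Tr K_{|conj(b_i)⟩⟨conj(b_i)|}(ρ) > 0, and let γ be a state with Tr K_γ(U_j K̂_{|conj(b_i)⟩⟨conj(b_i)|}(ρ) U_j*) > 0. Then the teleportation channel satisfies Λ_{i,j}(ρ ⊗ γ) = K̂_γ ∘ K^j ∘ K̂_{|conj(b_i)⟩⟨conj(b_i)|}(ρ), where K^j(σ) = U_j σ U_j* and K̂_τ(σ) = K_τ(σ)/Tr K_τ(σ). -/

import Mathlib

open scoped ComplexConjugate Kronecker ComplexOrder
noncomputable section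

/-- `L₂` space over a finite index set. -/
abbrev ES (α : Type) [Fintype α] := EuclideanSpace ℂ α
/-- `L₂(G)` for `G = {1,…,n}`. -/
abbrev L2 (n : ℕ) := EuclideanSpace ℂ (Fin n)

/-- The map `J : L₂(G) → L₂(G×G)`, `(Jf)(k,l) = f(k) δ_{k,l}`. -/
def Jmap (n : ℕ) : L2 n →ₗ[ℂ] ES (Fin n × Fin n) where
  toFun f := WithLp.toLp 2 (fun p : Fin n × Fin n => if p.1 = p.2 then f p.1 else 0)
  map_add' f g := by ext p; by_cases h : p.1 = p.2 <;> simp [h]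
  map_smul' c f := by ext p; by_cases h : p.1 = p.2 <;> simp [h]

/-- Multiplication operator `O_g`. -/
def mulOp {n : ℕ} (g : L2 n) : L2 n →ₗ[ℂ] L2 n where
  toFun f := WithLp.toLp 2 (fun k => g k * f k)
  map_add' f f' := by ext k; simp [mul_add]
  map_smul' c f := by ext k; simp <;> ring

/-- Translation operator `U_k`, `(U_k f)(m) = f(k ⊕ m)`. -/
def transOp {n : ℕ} [NeZero n] (k : Fin n) : L2 n →ₗ[ℂ] L2 n where
  toFun f := WithLp.toLp 2 (fun m => f (k + m))
  map_add' f f' := by ext m; simp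
  map_smul' c f := by ext m; simp

/-- Rank-one operator `|g⟩⟨g|`. -/
def rankOne {α : Type} [Fintype α] (g : ES α) : ES α →ₗ[ℂ] ES α where
  toFun f := (inner ℂ g f : ℂ) • g
  map_add' f f' := by simp [inner_add_right, add_smul]
  map_smul' c f := by simp [inner_smul_right, smul_smul]

/-- Matrix of an operator in the standard bases. -/
def matOf {α β : Type} [Fintype α] [Fintype β] [DecidableEq α] [DecidableEq β]
    (A : ES α →ₗ[ℂ] ES β) : Matrix β α ℂ :=
  LinearMap.toMatrix (PiLp.basisFun 2 ℂ α) (PiLp.basisFun 2 ℂ β) A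

/-- Tensor product `A ⊗ B` of operators, via the Kronecker product of their matrices. -/
def tensorOp {α β γ δ : Type} [Fintype α] [Fintype β] [Fintype γ] [Fintype δ]
    [DecidableEq α] [DecidableEq β] [DecidableEq γ] [DecidableEq δ]
    (A : ES α →ₗ[ℂ] ES β) (B : ES γ →ₗ[ℂ] ES δ) : ES (α × γ) →ₗ[ℂ] ES (β × δ) :=
  Matrix.toEuclideanLin (matOf A ⊗ₖ matOf B)

/-- Elementary tensor `f ⊗ g` of vectors. -/
def tensorVec {n : ℕ} (f g : L2 n) : ES (Fin n × Fin n) :=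
  WithLp.toLp 2 (fun p : Fin n × Fin n => f p.1 * g p.2)

/-- Positivity of an operator. -/
def IsPos {α : Type} [Fintype α] (T : ES α →ₗ[ℂ] ES α) : Prop :=
  ∀ x : ES α, (0 : ℂ) ≤ inner ℂ x (T x)

/-- The constant function `𝟏`. -/
def oneVec (n : ℕ) : L2 n := WithLp.toLp 2 (fun _ => 1)

/-- Pointwise conjugate of a vector. -/
def cvec {n : ℕ} (f : L2 n) : L2 n := WithLp.toLp 2 (fun k => conj (f k))

/-- Pointwise inverse of a vector. -/
def invVec {n : ℕ} (f : L2 n) : L2 n := WithLp.toLp 2 (fun k => (f k)⁻¹)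

/-- `ξ_{k,l} = (B_k ⊗ U_l) J 𝟏`. -/
def xi {n : ℕ} [NeZero n] (b : Fin n → L2 n) (k l : Fin n) : ES (Fin n × Fin n) :=
  tensorOp (mulOp (b k)) (transOp l) (Jmap n (oneVec n))

/-- The entangled state `e(γ) = J γ J*`. -/
def eState {n : ℕ} (γ : L2 n →ₗ[ℂ] L2 n) : ES (Fin n × Fin n) →ₗ[ℂ] ES (Fin n × Fin n) :=
  Jmap n ∘ₗ γ ∘ₗ LinearMap.adjoint (Jmap n)

/-- `T ⊗ S` with `T` acting on `H₁ ⊗ H₂` and `S` on `H₃`, realized on `Fin n × Fin n × Fin n`. -/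
def pairTensorOp {n : ℕ} (T : ES (Fin n × Fin n) →ₗ[ℂ] ES (Fin n × Fin n))
    (S : L2 n →ₗ[ℂ] L2 n) : ES (Fin n × Fin n × Fin n) →ₗ[ℂ] ES (Fin n × Fin n × Fin n) :=
  Matrix.toEuclideanLin
    ((Matrix.reindex (Equiv.prodAssoc (Fin n) (Fin n) (Fin n)) (Equiv.prodAssoc (Fin n) (Fin n) (Fin n)))
      (matOf T ⊗ₖ matOf S))

/-- Partial trace over the first two tensor components of `H₁ ⊗ H₂ ⊗ H₃`. -/
def ptrace12 {n : ℕ} (T : ES (Fin n × Fin n × Fin n) →ₗ[ℂ] ES (Fin n × Fin n × Fin n)) :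
    L2 n →ₗ[ℂ] L2 n :=
  Matrix.toEuclideanLin
    (Matrix.of fun c c' => ∑ a : Fin n, ∑ b : Fin n, matOf T (a, (b, c)) (a, (b, c')))

/-- `G_{i,j} = J* (U_j B_i* ⊗ 𝟏)`. -/
def Gop {n : ℕ} [NeZero n] (b : Fin n → L2 n) (i j : Fin n) : ES (Fin n × Fin n) →ₗ[ℂ] L2 n :=
  LinearMap.adjoint (Jmap n) ∘ₗ tensorOp (transOp j ∘ₗ LinearMap.adjoint (mulOp (b i))) LinearMap.id

/-- The isometry `t_h`. -/
def tMap {n : ℕ} (h : L2 n) : L2 n →ₗ[ℂ] ES (Fin 2 × Fin n) where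
  toFun f := WithLp.toLp 2 (fun p : Fin 2 × Fin n =>
    if p.1 = 0 then h p.2 * f p.2 else (Real.sqrt (1 - ‖h p.2‖ ^ 2) : ℂ) * f p.2)
  map_add' f f' := by ext p; by_cases hp : p.1 = 0 <;> simp [hp, mul_add]
  map_smul' c f := by ext p; by_cases hp : p.1 = 0 <;> simp [hp] <;> ring

/-- `E_h(B) = t_h* B t_h`. -/
def Emap {n : ℕ} (h : L2 n) (B : ES (Fin 2 × Fin n) →ₗ[ℂ] ES (Fin 2 × Fin n)) :
    L2 n →ₗ[ℂ] L2 n :=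
  LinearMap.adjoint (tMap h) ∘ₗ B ∘ₗ tMap h

/-- `K_τ` for `τ = ∑ γ_k |h_k⟩⟨h_k|`. -/
def Kmap {n : ℕ} (γ : Fin n → ℝ) (h : Fin n → L2 n) (ρ : L2 n →ₗ[ℂ] L2 n) :
    L2 n →ₗ[ℂ] L2 n :=
  ∑ k, (γ k : ℂ) • (mulOp (h k) ∘ₗ ρ ∘ₗ LinearMap.adjoint (mulOp (h k)))

/-- Normalized channel `K̂_τ`. -/
def Khat {n : ℕ} (γ : Fin n → ℝ) (h : Fin n → L2 n) (ρ : L2 n →ₗ[ℂ] L2 n) :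
    L2 n →ₗ[ℂ] L2 n :=
  (LinearMap.trace ℂ (L2 n) (Kmap γ h ρ))⁻¹ • Kmap γ h ρ

/-- `K_τ` for a rank-one `τ = |h⟩⟨h|`. -/
def KmapOne {n : ℕ} (h : L2 n) (ρ : L2 n →ₗ[ℂ] L2 n) : L2 n →ₗ[ℂ] L2 n :=
  mulOp h ∘ₗ ρ ∘ₗ LinearMap.adjoint (mulOp h)

/-- Normalized rank-one channel `K̂_{|h⟩⟨h|}`. -/
def KhatOne {n : ℕ} (h : L2 n) (ρ : L2 n →ₗ[ℂ] L2 n) : L2 n →ₗ[ℂ] L2 n :=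
  (LinearMap.trace ℂ (L2 n) (KmapOne h ρ))⁻¹ • KmapOne h ρ

/-- `(F_{i,j} ⊗ 𝟏)(ρ ⊗ e(γ))(F_{i,j} ⊗ 𝟏)`. -/
def sandwich {n : ℕ} [NeZero n] (b : Fin n → L2 n) (i j : Fin n)
    (ρ γ : L2 n →ₗ[ℂ] L2 n) : ES (Fin n × Fin n × Fin n) →ₗ[ℂ] ES (Fin n × Fin n × Fin n) :=
  pairTensorOp (rankOne (xi b i j)) LinearMap.id ∘ₗ tensorOp ρ (eState γ) ∘ₗ
    pairTensorOp (rankOne (xi b i j)) LinearMap.id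

/-- Teleportation channel `Λ_{i,j}`. -/
def Lam {n : ℕ} [NeZero n] (b : Fin n → L2 n) (i j : Fin n)
    (ρ γ : L2 n →ₗ[ℂ] L2 n) : L2 n →ₗ[ℂ] L2 n :=
  (LinearMap.trace ℂ (ES (Fin n × Fin n × Fin n)) (sandwich b i j ρ γ))⁻¹ •
    ptrace12 (sandwich b i j ρ γ)

open Classical in
/-- Von Neumann entropy of a (Hermitian) operator via its eigenvalues. -/
def vnEntropy {n : ℕ} (σ : L2 n →ₗ[ℂ] L2 n) : ℝ :=
  if h : (matOf σ).IsHermitian then -∑ k, (h.eigenvalues k * Real.log (h.eigenvalues k)) else 0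

/-- The set of values `∑ p_k S(Λ E_k)` over Schatten decompositions `ρ = ∑ p_k E_k`. -/
def ECDset {n : ℕ} (ρ : L2 n →ₗ[ℂ] L2 n)
    (Λ : (L2 n →ₗ[ℂ] L2 n) →ₗ[ℂ] (L2 n →ₗ[ℂ] L2 n)) : Set ℝ :=
  {x | ∃ (p : Fin n → ℝ) (e : Fin n → L2 n), Orthonormal ℂ e ∧ (∀ k, 0 ≤ p k) ∧
        (∑ k, p k) = 1 ∧ ρ = ∑ k, (p k : ℂ) • rankOne (e k) ∧
        x = ∑ k, p k * vnEntropy (Λ (rankOne (e k)))}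

/-!
In the standard bases every operator here is a matrix. The vector `ξ_{i,j}` has entries
`ξ(a, b) = [a = j + b] b_i(a)`, so sandwiching `ρ ⊗ e(γ)` between `|ξ⟩⟨ξ| ⊗ 𝟏` gives
`|ξ⟩⟨ξ| ⊗ M` with `M_{c c'} = γ_{c c'} · conj b_i(j+c) ρ_{j+c, j+c'} b_i(j+c')`.
As `‖ξ‖ = ‖b_i‖ = 1`, the partial trace over the first two factors is `M`, and `M` is
`K_γ (U_j K_{|conj b_i⟩⟨conj b_i|}(ρ) U_j*)` because `K_γ` is the Hadamard product with the
matrix of `γ`. Partial traces preserve the trace, and the normalising scalar of the inner channel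
cancels in `K̂_γ`.
-/

open scoped Matrix

section MatrixOfOperator

variable {α β δ : Type} [Fintype α] [Fintype β] [Fintype δ]
  [DecidableEq α] [DecidableEq β] [DecidableEq δ]

lemma matOf_toEuclideanLin (M : Matrix β α ℂ) : matOf (Matrix.toEuclideanLin M) = M :=
  LinearMap.toMatrix_toLin _ _ M

lemma toEuclideanLin_matOf (A : ES α →ₗ[ℂ] ES β) : Matrix.toEuclideanLin (matOf A) = A :=
  Matrix.toLin_toMatrix (PiLp.basisFun 2 ℂ α) (PiLp.basisFun 2 ℂ β) A

lemma matOf_injective : Function.Injective (matOf : (ES α →ₗ[ℂ] ES β) → Matrix β α ℂ) :=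
  (LinearMap.toMatrix _ _).injective

lemma matOf_apply (A : ES α →ₗ[ℂ] ES β) (p : β) (q : α) :
    matOf A p q = A (EuclideanSpace.single q 1) p := by
  rw [matOf, LinearMap.toMatrix_apply, PiLp.basisFun_apply]
  rfl

lemma apply_eq_sum_matOf (A : ES α →ₗ[ℂ] ES β) (f : ES α) (p : β) :
    A f p = ∑ q, matOf A p q * f q := by
  conv_lhs => rw [← toEuclideanLin_matOf A]
  rfl

lemma matOf_comp (A : ES β →ₗ[ℂ] ES δ) (B : ES α →ₗ[ℂ] ES β) :
    matOf (A ∘ₗ B) = matOf A * matOf B :=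
  LinearMap.toMatrix_comp _ _ _ A B

lemma matOf_adjoint (A : ES α →ₗ[ℂ] ES β) : matOf (LinearMap.adjoint A) = (matOf A)ᴴ := by
  conv_lhs => rw [← toEuclideanLin_matOf A]
  rw [← Matrix.toEuclideanLin_conjTranspose_eq_adjoint, matOf_toEuclideanLin]

lemma matOf_smul (c : ℂ) (A : ES α →ₗ[ℂ] ES β) : matOf (c • A) = c • matOf A :=
  map_smul (LinearMap.toMatrix _ _) c A

lemma matOf_sum {ι : Type} (s : Finset ι) (f : ι → ES α →ₗ[ℂ] ES β) :
    matOf (∑ i ∈ s, f i) = ∑ i ∈ s, matOf (f i) :=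
  map_sum (LinearMap.toMatrix _ _) f s

lemma matOf_id : matOf (LinearMap.id : ES α →ₗ[ℂ] ES α) = 1 :=
  LinearMap.toMatrix_id _

lemma trace_eq_trace_matOf (A : ES α →ₗ[ℂ] ES α) :
    LinearMap.trace ℂ (ES α) A = (matOf A).trace :=
  LinearMap.trace_eq_matrix_trace ℂ _ A

lemma matOf_rankOne (g : ES α) : matOf (rankOne g) = Matrix.of fun p q => g p * conj (g q) := by
  ext p q
  rw [matOf_apply]
  simp [rankOne, EuclideanSpace.inner_single_right, mul_comm]

lemma matOf_tensorOp {γ : Type} [Fintype γ] [DecidableEq γ]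
    (A : ES α →ₗ[ℂ] ES β) (B : ES γ →ₗ[ℂ] ES δ) :
    matOf (tensorOp A B) = matOf A ⊗ₖ matOf B :=
  matOf_toEuclideanLin _

end MatrixOfOperator

section Operators

variable {n : ℕ}

lemma matOf_mulOp (g : L2 n) : matOf (mulOp g) = Matrix.diagonal g := by
  ext k q
  rw [matOf_apply]
  simp [mulOp, Matrix.diagonal]

lemma matOf_transOp [NeZero n] (k : Fin n) :
    matOf (transOp k) = Matrix.of fun m q => if q = k + m then 1 else 0 := by
  ext m q
  rw [matOf_apply]
  simp [transOp, eq_comm]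

lemma matOf_Jmap :
    matOf (Jmap n) = Matrix.of fun (p : Fin n × Fin n) m =>
      if p.1 = p.2 ∧ p.2 = m then 1 else 0 := by
  ext ⟨k, l⟩ m
  rw [matOf_apply]
  by_cases h : k = l <;> simp [Jmap, h]

lemma matOf_eState (γ : L2 n →ₗ[ℂ] L2 n) :
    matOf (eState γ) = Matrix.of fun (p q : Fin n × Fin n) =>
      if p.1 = p.2 ∧ q.1 = q.2 then matOf γ p.1 q.1 else 0 := by
  rw [eState, matOf_comp, matOf_comp, matOf_adjoint, matOf_Jmap]
  ext ⟨k, l⟩ ⟨k', l'⟩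
  by_cases h : k = l <;> by_cases h' : k' = l' <;>
    simp [h, h', Matrix.mul_apply, Finset.sum_ite_eq]

lemma matOf_pairTensorOp (T : ES (Fin n × Fin n) →ₗ[ℂ] ES (Fin n × Fin n))
    (S : L2 n →ₗ[ℂ] L2 n) :
    matOf (pairTensorOp T S) =
      Matrix.reindex (Equiv.prodAssoc _ _ _) (Equiv.prodAssoc _ _ _) (matOf T ⊗ₖ matOf S) :=
  matOf_toEuclideanLin _

lemma matOf_ptrace12 (T : ES (Fin n × Fin n × Fin n) →ₗ[ℂ] ES (Fin n × Fin n × Fin n)) :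
    matOf (ptrace12 T) =
      Matrix.of fun c c' => ∑ a : Fin n, ∑ b : Fin n, matOf T (a, b, c) (a, b, c') :=
  matOf_toEuclideanLin _

lemma trace_ptrace12 (T : ES (Fin n × Fin n × Fin n) →ₗ[ℂ] ES (Fin n × Fin n × Fin n)) :
    LinearMap.trace ℂ _ (ptrace12 T) = LinearMap.trace ℂ _ T := by
  simp only [trace_eq_trace_matOf, matOf_ptrace12, Matrix.trace, Matrix.diag_apply,
    Matrix.of_apply, Fintype.sum_prod_type]
  rw [Finset.sum_comm]
  exact Finset.sum_congr rfl fun _ _ => Finset.sum_comm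

end Operators

section Channels

variable {n : ℕ}

lemma matOf_KmapOne (h : L2 n) (ρ : L2 n →ₗ[ℂ] L2 n) :
    matOf (KmapOne h ρ) = Matrix.of fun k l => h k * matOf ρ k l * conj (h l) := by
  ext k l
  simp [KmapOne, matOf_comp, matOf_adjoint, matOf_mulOp, Matrix.diagonal_mul, Matrix.mul_diagonal,
    mul_assoc]

lemma matOf_transOp_conj [NeZero n] (j : Fin n) (σ : L2 n →ₗ[ℂ] L2 n) :
    matOf (transOp j ∘ₗ σ ∘ₗ LinearMap.adjoint (transOp j)) =
      Matrix.of fun c c' => matOf σ (j + c) (j + c') := by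
  ext c c'
  simp [matOf_comp, matOf_adjoint, matOf_transOp, Matrix.mul_apply, apply_ite (star : ℂ → ℂ)]

lemma matOf_Kmap (β : Fin n → ℝ) (h : Fin n → L2 n) (σ : L2 n →ₗ[ℂ] L2 n) :
    matOf (Kmap β h σ) = matOf (∑ k, (β k : ℂ) • rankOne (h k)) ⊙ matOf σ := by
  ext c c'
  simp only [Kmap, matOf_sum, matOf_smul, matOf_comp, matOf_adjoint, matOf_mulOp, matOf_rankOne,
    Matrix.hadamard_apply, Matrix.sum_apply, Finset.sum_mul]
  refine Finset.sum_congr rfl fun k _ => ?_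
  simp [Matrix.diagonal_mul, Matrix.mul_diagonal]
  ring

lemma Kmap_smul (β : Fin n → ℝ) (h : Fin n → L2 n) (s : ℂ) (σ : L2 n →ₗ[ℂ] L2 n) :
    Kmap β h (s • σ) = s • Kmap β h σ := by
  simp only [Kmap, LinearMap.comp_smul, LinearMap.smul_comp, Finset.smul_sum, smul_comm s]

lemma Khat_smul (β : Fin n → ℝ) (h : Fin n → L2 n) {s : ℂ} (hs : s ≠ 0)
    (σ : L2 n →ₗ[ℂ] L2 n) : Khat β h (s • σ) = Khat β h σ := by
  rw [Khat, Khat, Kmap_smul, map_smul, smul_smul, smul_eq_mul, mul_inv, mul_comm s⁻¹,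
    mul_assoc, inv_mul_cancel₀ hs, mul_one]

end Channels

section Teleportation

variable {n : ℕ}

lemma matOf_pairTensorOp_rankOne_id (v : ES (Fin n × Fin n)) :
    matOf (pairTensorOp (rankOne v) LinearMap.id) =
      Matrix.of fun (x y : Fin n × Fin n × Fin n) =>
        if x.2.2 = y.2.2 then v (x.1, x.2.1) * conj (v (y.1, y.2.1)) else 0 := by
  ext ⟨a, b, c⟩ ⟨a', b', c'⟩
  simp [matOf_pairTensorOp, matOf_rankOne, matOf_id, Matrix.one_apply]

lemma matOf_tensorOp_eState (ρ γ : L2 n →ₗ[ℂ] L2 n) :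
    matOf (tensorOp ρ (eState γ)) =
      Matrix.of fun (x y : Fin n × Fin n × Fin n) =>
        if x.2.1 = x.2.2 ∧ y.2.1 = y.2.2 then matOf ρ x.1 y.1 * matOf γ x.2.1 y.2.1 else 0 := by
  ext ⟨a, b, c⟩ ⟨a', b', c'⟩
  simp [matOf_tensorOp, matOf_eState]

lemma matOf_rankOne_sandwich_apply (v : ES (Fin n × Fin n)) (ρ γ : L2 n →ₗ[ℂ] L2 n)
    (a b c a' b' c' : Fin n) :
    matOf (pairTensorOp (rankOne v) LinearMap.id ∘ₗ tensorOp ρ (eState γ) ∘ₗ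
        pairTensorOp (rankOne v) LinearMap.id) (a, b, c) (a', b', c') =
      v (a, b) * conj (v (a', b')) *
        (matOf γ c c' * ∑ u, ∑ w, conj (v (u, c)) * matOf ρ u w * v (w, c')) := by
  simp only [matOf_comp, matOf_pairTensorOp_rankOne_id, matOf_tensorOp_eState, Matrix.mul_apply,
    Matrix.of_apply, Fintype.sum_prod_type]
  simp only [ite_and, ite_mul, zero_mul, Finset.sum_ite_irrel, Finset.sum_const_zero,
    Finset.sum_ite_eq, Finset.sum_ite_eq', Finset.mem_univ, if_true, mul_ite, mul_zero,
    Finset.mul_sum]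
  refine Finset.sum_congr rfl fun u _ => Finset.sum_congr rfl fun w _ => ?_
  ring

lemma sum_mul_conj_eq_norm_sq {α : Type} [Fintype α] (v : ES α) :
    ∑ p, v p * conj (v p) = (‖v‖ : ℂ) ^ 2 := by
  rw [← Complex.ofReal_pow, EuclideanSpace.norm_sq_eq, Complex.ofReal_sum]
  exact Finset.sum_congr rfl fun p _ => by rw [Complex.mul_conj', Complex.ofReal_pow]

variable [NeZero n]

lemma xi_apply (b : Fin n → L2 n) (i j : Fin n) (p : Fin n × Fin n) :
    xi b i j p = if p.1 = j + p.2 then b i p.1 else 0 := by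
  rw [xi, apply_eq_sum_matOf]
  simp [Jmap, oneVec, matOf_tensorOp, matOf_mulOp, matOf_transOp, Fintype.sum_prod_type,
    Matrix.diagonal, eq_comm]

lemma norm_xi (b : Fin n → L2 n) (i j : Fin n) : ‖xi b i j‖ = ‖b i‖ := by
  rw [EuclideanSpace.norm_eq, EuclideanSpace.norm_eq, Fintype.sum_prod_type, Finset.sum_comm]
  simp only [xi_apply, apply_ite norm, norm_zero, ite_pow, zero_pow two_ne_zero,
    Finset.sum_ite_eq', Finset.mem_univ, if_true]
  exact congrArg _ (Equiv.sum_comp (Equiv.addLeft j) fun a => ‖b i a‖ ^ 2)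

lemma sum_conj_xi_mul_matOf_mul_xi (b : Fin n → L2 n) (i j : Fin n) (ρ : L2 n →ₗ[ℂ] L2 n)
    (c c' : Fin n) :
    ∑ u, ∑ w, conj (xi b i j (u, c)) * matOf ρ u w * xi b i j (w, c') =
      matOf (transOp j ∘ₗ KmapOne (cvec (b i)) ρ ∘ₗ LinearMap.adjoint (transOp j)) c c' := by
  simp [matOf_transOp_conj, matOf_KmapOne, xi_apply, cvec, apply_ite conj, mul_comm]

lemma ptrace12_sandwich (b : Fin n → L2 n) {i : Fin n} (hb : ‖b i‖ = 1) (j : Fin n)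
    (ρ : L2 n →ₗ[ℂ] L2 n) (β : Fin n → ℝ) (h : Fin n → L2 n) :
    ptrace12 (sandwich b i j ρ (∑ k, (β k : ℂ) • rankOne (h k))) =
      Kmap β h (transOp j ∘ₗ KmapOne (cvec (b i)) ρ ∘ₗ LinearMap.adjoint (transOp j)) := by
  apply matOf_injective
  ext c c'
  have hxi : ∑ a, ∑ b', xi b i j (a, b') * conj (xi b i j (a, b')) = 1 := by
    rw [← Fintype.sum_prod_type', sum_mul_conj_eq_norm_sq, norm_xi, hb]
    norm_num
  simp only [matOf_ptrace12, matOf_Kmap, sandwich, matOf_rankOne_sandwich_apply,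
    sum_conj_xi_mul_matOf_mul_xi, Matrix.of_apply, Matrix.hadamard_apply, ← Finset.sum_mul, hxi,
    one_mul]

end Teleportation

theorem stmt18_general {n : ℕ} [NeZero n] (b : OrthonormalBasis (Fin n) ℂ (L2 n))
    (hON : OrthonormalBasis (Fin n) ℂ (L2 n)) (β : Fin n → ℝ)
    (γ : L2 n →ₗ[ℂ] L2 n) (hγ : γ = ∑ k, (β k : ℂ) • rankOne (hON k))
    (ρ : L2 n →ₗ[ℂ] L2 n)
    (i j : Fin n)
    (h1 : 0 < (LinearMap.trace ℂ (L2 n) (KmapOne (cvec (b i)) ρ)).re) :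
    Lam (⇑b) i j ρ γ =
      Khat β (⇑hON)
        (transOp j ∘ₗ KhatOne (cvec (b i)) ρ ∘ₗ LinearMap.adjoint (transOp j)) := by
  subst hγ
  have ht : LinearMap.trace ℂ (L2 n) (KmapOne (cvec (b i)) ρ) ≠ 0 := fun h0 => by
    simp [h0] at h1
  rw [KhatOne, LinearMap.smul_comp, LinearMap.comp_smul, Khat_smul β hON (inv_ne_zero ht), Lam,
    ← trace_ptrace12, ptrace12_sandwich b (b.orthonormal.1 i)]
  rfl

/-- channel decomposition
`Λ_{i,j}(ρ ⊗ γ) = K̂_γ ∘ K^j ∘ K̂_{|conj(b_i)⟩⟨conj(b_i)|}(ρ)`. -/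
theorem stmt18 {n : ℕ} [NeZero n] (b : OrthonormalBasis (Fin n) ℂ (L2 n))
    (hON : OrthonormalBasis (Fin n) ℂ (L2 n)) (β : Fin n → ℝ) (hβ : ∀ k, 0 ≤ β k)
    (γ : L2 n →ₗ[ℂ] L2 n) (hγ : γ = ∑ k, (β k : ℂ) • rankOne (hON k))
    (ρ : L2 n →ₗ[ℂ] L2 n) (hρ : IsPos ρ) (hρt : LinearMap.trace ℂ (L2 n) ρ = 1)
    (i j : Fin n)
    (h1 : 0 < (LinearMap.trace ℂ (L2 n) (KmapOne (cvec (b i)) ρ)).re)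
    (h2 : 0 < (LinearMap.trace ℂ (L2 n)
        (Kmap β (⇑hON)
          (transOp j ∘ₗ KhatOne (cvec (b i)) ρ ∘ₗ LinearMap.adjoint (transOp j)))).re)
    (hden : 0 < (LinearMap.trace ℂ (ES (Fin n × Fin n × Fin n))
        (sandwich (⇑b) i j ρ γ)).re) :
    Lam (⇑b) i j ρ γ =
      Khat β (⇑hON)
        (transOp j ∘ₗ KhatOne (cvec (b i)) ρ ∘ₗ LinearMap.adjoint (transOp j)) :=
  stmt18_general b hON β γ hγ ρ i j h1
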